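/- For every ε > 0, the function p ↦ ω(p,ε) is continuous on [0,1]. -/

import Mathlib

open Real

/-- Bernoulli Kullback–Leibler divergence `kl(a‖b)`. -/
noncomputable def klBer (a b : ℝ) : ℝ :=
  a * Real.log (a / b) + (1 - a) * Real.log ((1 - a) / (1 - b))

/-- `ω(p, ε)`: for `p ∈ (0, e^{-ε}]` the unique `η ∈ [0, 1 - p]` with
`kl(p+η‖p) = ε`, `ω(0, ε) = 0`, and `ω(p, ε) = 1 - p` for `p ∈ (e^{-ε}, 1]`. -/
noncomputable def omegaKL (p ε : ℝ) : ℝ :=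
  if p = 0 then 0
  else if p ≤ Real.exp (-ε) then
    sInf {η : ℝ | η ∈ Set.Icc 0 (1 - p) ∧ klBer (p + η) p = ε}
  else 1 - p

open Set Filter Topology

/-! For `0 < p < 1` the map `η ↦ kl(p+η‖p)` is continuous and strictly increasing on `[0, 1-p]`.
Hence, for `0 ≤ η < 1 - p`, comparing `η` with `ω(p,ε)` amounts to comparing `kl(p+η‖p)` with `ε`;
this also holds when `p > e^{-ε}`, because then `kl(p+η‖p) < kl(1‖p) = -log p < ε`. Both
comparisons are open conditions in `p`, since `p ↦ kl(p+η‖p)` is continuous, and this gives lower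
and upper semicontinuity of `ω(·,ε)` on `(0,1]`. At `p = 0`, `kl(p+η‖p) → ∞` as `p → 0⁺`, so
`ω(p,ε) → 0`. -/

lemma klBer_self (p : ℝ) : klBer p p = 0 := by
  simp [klBer]

lemma klBer_one_left (p : ℝ) : klBer 1 p = -log p := by
  simp [klBer]

lemma klBer_eq_mul_log {a b : ℝ} (hb0 : b ≠ 0) (hb1 : b ≠ 1) :
    klBer a b = a * log a + (1 - a) * log (1 - a) - (a * log b + (1 - a) * log (1 - b)) := by
  have hb1' : 1 - b ≠ 0 := sub_ne_zero.2 hb1.symm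
  have first : a * log (a / b) = a * log a - a * log b := by
    rcases eq_or_ne a 0 with rfl | ha
    · simp
    · rw [log_div ha hb0]; ring
  have second : (1 - a) * log ((1 - a) / (1 - b))
      = (1 - a) * log (1 - a) - (1 - a) * log (1 - b) := by
    rcases eq_or_ne (1 - a) 0 with ha | ha
    · simp [ha]
    · rw [log_div ha hb1']; ring
  rw [klBer, first, second]; ring

lemma continuous_klBer_left {b : ℝ} (hb0 : b ≠ 0) (hb1 : b ≠ 1) :
    Continuous fun a => klBer a b := by
  simp only [klBer_eq_mul_log hb0 hb1]
  exact (continuous_mul_log.add (continuous_mul_log.comp (continuous_const.sub continuous_id))).sub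
    (by fun_prop)

lemma strictMonoOn_klBer_left {b : ℝ} (hb0 : 0 < b) (hb1 : b < 1) :
    StrictMonoOn (fun a => klBer a b) (Icc b 1) := by
  refine strictMonoOn_of_deriv_pos (convex_Icc b 1)
    (continuous_klBer_left hb0.ne' hb1.ne).continuousOn fun x hx => ?_
  rw [interior_Icc] at hx
  have hx0 : x ≠ 0 := (hb0.trans hx.1).ne'
  have hx1 : 1 - x ≠ 0 := (sub_pos.2 hx.2).ne'
  have hlin : HasDerivAt (fun a => a * log b + (1 - a) * log (1 - b)) (log b - log (1 - b)) x := by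
    simpa [sub_eq_add_neg] using
      (hasDerivAt_mul_const (log b)).fun_add (((hasDerivAt_id' x).const_sub 1).mul_const _)
  have hderiv : HasDerivAt (fun a => klBer a b)
      (log x + 1 + (log (1 - x) + 1) * -1 - (log b - log (1 - b))) x := by
    simp only [klBer_eq_mul_log hb0.ne' hb1.ne]
    exact ((hasDerivAt_mul_log hx0).fun_add
      ((hasDerivAt_mul_log hx1).comp x ((hasDerivAt_id' x).const_sub 1))).fun_sub hlin
  rw [hderiv.deriv]
  have := log_lt_log hb0 hx.1
  have := log_lt_log (sub_pos.2 hx.2) (sub_lt_sub_left hx.1 1)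
  linarith

lemma strictMonoOn_klBer_add_self {p : ℝ} (hp0 : 0 < p) (hp1 : p < 1) :
    StrictMonoOn (fun η => klBer (p + η) p) (Icc 0 (1 - p)) :=
  (strictMonoOn_klBer_left hp0 hp1).comp (fun _ _ _ _ h => add_lt_add_right h p)
    fun η hη => ⟨by linarith [hη.1], by linarith [hη.2]⟩

lemma continuousAt_klBer_add_self {p₀ η : ℝ} (hp₀ : 0 < p₀) (hη : 0 ≤ η) (hη1 : p₀ + η < 1) :
    ContinuousAt (fun p => klBer (p + η) p) p₀ := by
  unfold klBer
  fun_prop (disch := apply ne_of_gt; first | (apply div_pos <;> linarith) | linarith)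

lemma tendsto_klBer_add_self_nhdsGT_zero {η : ℝ} (hη : 0 < η) :
    Tendsto (fun p => klBer (p + η) p) (𝓝[>] 0) atTop := by
  have hmul_log : Continuous fun p => (p + η) * log (p + η) + (1 - (p + η)) * log (1 - (p + η)) :=
    (continuous_mul_log.comp (continuous_add_const η)).add
      (continuous_mul_log.comp (continuous_const.sub (continuous_add_const η)))
  have hbounded : ContinuousAt (fun p => (p + η) * log (p + η) + (1 - (p + η)) * log (1 - (p + η))
      - (1 - (p + η)) * log (1 - p)) 0 :=
    hmul_log.continuousAt.sub (by fun_prop (disch := norm_num))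
  have hunbounded : Tendsto (fun p => (p + η) * -log p) (𝓝[>] 0) atTop :=
    (((continuous_add_const η).tendsto' 0 η (zero_add η)).mono_left
      nhdsWithin_le_nhds).pos_mul_atTop hη (tendsto_neg_atBot_atTop.comp tendsto_log_nhdsGT_zero)
  refine ((hbounded.tendsto.mono_left nhdsWithin_le_nhds).add_atTop hunbounded).congr' ?_
  filter_upwards [Ioo_mem_nhdsGT one_pos] with p hp
  rw [klBer_eq_mul_log hp.1.ne' hp.2.ne]
  ring

section omegaKL

variable {ε : ℝ}

lemma omegaKL_zero_left (ε : ℝ) : omegaKL 0 ε = 0 := by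
  simp [omegaKL]

lemma omegaKL_of_exp_neg_lt {p : ℝ} (hp : exp (-ε) < p) : omegaKL p ε = 1 - p := by
  rw [omegaKL, if_neg ((exp_pos _).trans hp).ne', if_neg hp.not_ge]

lemma omegaKL_spec (hε : 0 < ε) {p : ℝ} (hp0 : 0 < p) (hpε : p ≤ exp (-ε)) :
    omegaKL p ε ∈ Icc 0 (1 - p) ∧ klBer (p + omegaKL p ε) p = ε := by
  have hp1 : p < 1 := hpε.trans_lt (exp_lt_one_iff.2 (neg_lt_zero.2 hε))
  have hmono := strictMonoOn_klBer_add_self hp0 hp1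
  have hcont : ContinuousOn (fun η => klBer (p + η) p) (Icc 0 (1 - p)) :=
    ((continuous_klBer_left hp0.ne' hp1.ne).comp (continuous_const_add p)).continuousOn
  have hε_mem : ε ∈ Icc (klBer (p + 0) p) (klBer (p + (1 - p)) p) := by
    rw [add_zero, klBer_self, add_sub_cancel, klBer_one_left]
    exact ⟨hε.le, by linarith [log_le_log hp0 hpε, log_exp (-ε)]⟩
  obtain ⟨η, hη, hroot⟩ := intermediate_value_Icc (by linarith) hcont hε_mem
  have hroots : {η : ℝ | η ∈ Icc 0 (1 - p) ∧ klBer (p + η) p = ε} = {η} :=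
    Set.eq_singleton_iff_unique_mem.2
      ⟨⟨hη, hroot⟩, fun ξ hξ => hmono.injOn hξ.1 hη (hξ.2.trans hroot.symm)⟩
  rw [omegaKL, if_neg hp0.ne', if_pos hpε, hroots, csInf_singleton]
  exact ⟨hη, hroot⟩

lemma omegaKL_mem_Icc (hε : 0 < ε) {p : ℝ} (hp : p ∈ Icc 0 1) :
    omegaKL p ε ∈ Icc 0 (1 - p) := by
  rcases hp.1.eq_or_lt with rfl | hp0
  · simp [omegaKL_zero_left]
  rcases le_or_gt p (exp (-ε)) with hpε | hpε
  · exact (omegaKL_spec hε hp0 hpε).1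
  · rw [omegaKL_of_exp_neg_lt hpε]
    exact ⟨sub_nonneg.2 hp.2, le_rfl⟩

lemma klBer_add_self_lt_of_exp_neg_lt {p η : ℝ} (hp : exp (-ε) < p) (hη : 0 ≤ η)
    (hη1 : η < 1 - p) : klBer (p + η) p < ε := by
  have hp0 := (exp_pos _).trans hp
  have hp1 : p < 1 := by linarith
  calc klBer (p + η) p < klBer (p + (1 - p)) p :=
        strictMonoOn_klBer_add_self hp0 hp1 ⟨hη, hη1.le⟩ ⟨by linarith, le_rfl⟩ hη1
    _ = -log p := by rw [add_sub_cancel, klBer_one_left]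
    _ < ε := by linarith [log_lt_log (exp_pos _) hp, log_exp (-ε)]

lemma lt_omegaKL_iff (hε : 0 < ε) {p η : ℝ} (hp : 0 < p) (hη : 0 ≤ η) (hη1 : η < 1 - p) :
    η < omegaKL p ε ↔ klBer (p + η) p < ε := by
  rcases le_or_gt p (exp (-ε)) with hpε | hpε
  · obtain ⟨hω, hroot⟩ := omegaKL_spec hε hp hpε
    conv_rhs => rw [← hroot]
    exact ((strictMonoOn_klBer_add_self hp (by linarith)).lt_iff_lt ⟨hη, hη1.le⟩ hω).symm
  · rw [omegaKL_of_exp_neg_lt hpε]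
    exact iff_of_true hη1 (klBer_add_self_lt_of_exp_neg_lt hpε hη hη1)

lemma omegaKL_lt_iff (hε : 0 < ε) {p η : ℝ} (hp : 0 < p) (hη : 0 ≤ η) (hη1 : η < 1 - p) :
    omegaKL p ε < η ↔ ε < klBer (p + η) p := by
  rcases le_or_gt p (exp (-ε)) with hpε | hpε
  · obtain ⟨hω, hroot⟩ := omegaKL_spec hε hp hpε
    conv_rhs => rw [← hroot]
    exact ((strictMonoOn_klBer_add_self hp (by linarith)).lt_iff_lt hω ⟨hη, hη1.le⟩).symm
  · rw [omegaKL_of_exp_neg_lt hpε]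
    exact iff_of_false hη1.not_gt (klBer_add_self_lt_of_exp_neg_lt hpε hη hη1).not_gt

lemma eventually_lt_omegaKL (hε : 0 < ε) {p₀ c : ℝ} (hp₀ : p₀ ∈ Icc 0 1) (hc : c < omegaKL p₀ ε) :
    ∀ᶠ p in 𝓝[Icc 0 1] p₀, c < omegaKL p ε := by
  rcases lt_or_ge c 0 with hc0 | hc0
  · filter_upwards [self_mem_nhdsWithin] with p hp
    exact hc0.trans_le (omegaKL_mem_Icc hε hp).1
  have hp₀0 : 0 < p₀ := hp₀.1.lt_of_ne <| by
    rintro rfl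
    exact hc0.not_gt (by rwa [omegaKL_zero_left] at hc)
  have hc1 : c < 1 - p₀ := hc.trans_le (omegaKL_mem_Icc hε hp₀).2
  have hkl : klBer (p₀ + c) p₀ < ε := (lt_omegaKL_iff hε hp₀0 hc0 hc1).1 hc
  have hnear := ((continuousAt_klBer_add_self hp₀0 hc0 (by linarith)).eventually_lt
    continuousAt_const hkl).and (Ioo_mem_nhds hp₀0 (by linarith : p₀ < 1 - c))
  filter_upwards [nhdsWithin_le_nhds hnear] with p ⟨hkl, hp⟩
  exact (lt_omegaKL_iff hε hp.1 hc0 (by linarith [hp.2])).2 hkl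

lemma eventually_omegaKL_lt_of_pos (hε : 0 < ε) {p₀ c : ℝ} (hp₀ : 0 < p₀)
    (hc : omegaKL p₀ ε < c) (hc1 : c ≤ 1 - p₀) (hω : 0 ≤ omegaKL p₀ ε) :
    ∀ᶠ p in 𝓝 p₀, omegaKL p ε < c := by
  obtain ⟨η, hωη, hηc⟩ := exists_between hc
  have hη0 : 0 ≤ η := hω.trans hωη.le
  have hη1 : η < 1 - p₀ := hηc.trans_le hc1
  have hkl : ε < klBer (p₀ + η) p₀ := (omegaKL_lt_iff hε hp₀ hη0 hη1).1 hωη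
  have hnear := (continuousAt_const.eventually_lt
    (continuousAt_klBer_add_self hp₀ hη0 (by linarith)) hkl).and
    (Ioo_mem_nhds hp₀ (by linarith : p₀ < 1 - η))
  filter_upwards [hnear] with p ⟨hkl, hp⟩
  exact ((omegaKL_lt_iff hε hp.1 hη0 (by linarith [hp.2])).2 hkl).trans hηc

lemma eventually_omegaKL_lt_of_zero (hε : 0 < ε) {c : ℝ} (hc : 0 < c) (hc1 : c ≤ 1) :
    ∀ᶠ p in 𝓝[Icc 0 1] 0, omegaKL p ε < c := by
  have hkl := eventually_nhdsWithin_iff.1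
    ((tendsto_klBer_add_self_nhdsGT_zero (half_pos hc)).eventually_gt_atTop ε)
  filter_upwards [nhdsWithin_le_nhds hkl, nhdsWithin_le_nhds (Iio_mem_nhds (by linarith :
    (0 : ℝ) < 1 - c / 2)), self_mem_nhdsWithin] with p hkl hp1 hp
  rcases hp.1.eq_or_lt with rfl | hp0
  · rwa [omegaKL_zero_left]
  · exact ((omegaKL_lt_iff hε hp0 (half_pos hc).le (by linarith [mem_Iio.1 hp1])).2
      (hkl hp0)).trans (half_lt_self hc)

lemma eventually_omegaKL_lt (hε : 0 < ε) {p₀ c : ℝ} (hp₀ : p₀ ∈ Icc 0 1)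
    (hc : omegaKL p₀ ε < c) : ∀ᶠ p in 𝓝[Icc 0 1] p₀, omegaKL p ε < c := by
  have hω := omegaKL_mem_Icc hε hp₀
  rcases lt_or_ge (1 - p₀) c with hc1 | hc1
  · have hnear := (continuous_const.sub continuous_id).continuousAt.eventually_lt
      continuousAt_const hc1
    filter_upwards [nhdsWithin_le_nhds hnear, self_mem_nhdsWithin] with p hp hp'
    exact (omegaKL_mem_Icc hε hp').2.trans_lt hp
  rcases hp₀.1.eq_or_lt with rfl | hp₀0
  · exact eventually_omegaKL_lt_of_zero hε (hω.1.trans_lt hc) (by simpa using hc1)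
  · exact nhdsWithin_le_nhds (eventually_omegaKL_lt_of_pos hε hp₀0 hc hc1 hω.1)

end omegaKL

/-- **Lemma 6**: for every `ε > 0`, the map `p ↦ ω(p,ε)` is continuous on `[0,1]`. -/
theorem omegaKL_continuous (ε : ℝ) (hε : 0 < ε) :
    ContinuousOn (fun p => omegaKL p ε) (Set.Icc (0 : ℝ) 1) := fun _ hp₀ =>
  tendsto_order.2 ⟨fun _ hc => eventually_lt_omegaKL hε hp₀ hc,
    fun _ hc => eventually_omegaKL_lt hε hp₀ hc⟩
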